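/- arXiv:2501.19261 — 3 statements merged into one kernel-verified Lean document; each statement's English description precedes it below -/
import Mathlib

section
/- For n-qubit Pauli strings P, P' (tensor products of n single-qubit Pauli matrices, d = 2^n), the sum over all pairs (P,P') of Tr[(PP')^k] equals d^5 when k ≡ 0 (mod 4), and equals d^3 otherwise. -/
open Matrix Complex

noncomputable def pauli : Fin 4 → Matrix (Fin 2) (Fin 2) ℂ :=
  ![1, !![0, 1; 1, 0], !![0, -Complex.I; Complex.I, 0], !![1, 0; 0, -1]]

/-- The `n`-qubit Pauli string `σ^{a 1} ⊗ ⋯ ⊗ σ^{a n}` as a matrix. -/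
noncomputable def pauliString (n : ℕ) (a : Fin n → Fin 4) :
    Matrix (Fin n → Fin 2) (Fin n → Fin 2) ℂ :=
  Matrix.of fun i j => ∏ t, pauli (a t) (i t) (j t)

/-
Pauli strings are tensor products, and products, powers and traces of tensor products factor
qubit by qubit; so the double sum over pairs of strings is the `n`-th power of the single-qubit
sum `∑_{α,β} Tr[(σ^α σ^β)^k]`. Every product `σ^α σ^β` is `±1` or `±i` times a Pauli matrix,
hence has fourth power `1`, and a direct computation gives the single-qubit sum `32 = 2^5`
when `4 ∣ k` and `8 = 2^3` otherwise.
-/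

def piKron {ι m R : Type*} [Fintype ι] [CommSemiring R] (f : ι → Matrix m m R) :
    Matrix (ι → m) (ι → m) R :=
  Matrix.of fun i j => ∏ t, f t (i t) (j t)

section piKron

variable {ι m R : Type*} [Fintype ι] [DecidableEq ι] [Fintype m] [DecidableEq m] [CommSemiring R]

omit [DecidableEq m] in
lemma piKron_mul (f g : ι → Matrix m m R) : piKron f * piKron g = piKron (f * g) := by
  ext i j
  simp only [piKron, Matrix.mul_apply, Matrix.of_apply, Pi.mul_apply]
  rw [Fintype.prod_sum fun t x => f t (i t) x * g t x (j t)]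
  exact Finset.sum_congr rfl fun x _ => Finset.prod_mul_distrib.symm

omit [DecidableEq ι] [Fintype m] in
lemma piKron_one : piKron (1 : ι → Matrix m m R) = 1 := by
  ext i j
  by_cases h : i = j
  · simp [piKron, h, Matrix.one_apply]
  · obtain ⟨t, ht⟩ := Function.ne_iff.mp h
    rw [Matrix.one_apply_ne h]
    exact Finset.prod_eq_zero (Finset.mem_univ t) (Matrix.one_apply_ne ht)

lemma piKron_pow (f : ι → Matrix m m R) (k : ℕ) : piKron f ^ k = piKron (f ^ k) := by
  induction k with
  | zero => exact piKron_one.symm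
  | succ k ih => rw [pow_succ, ih, piKron_mul, pow_succ]

omit [DecidableEq m] in
lemma trace_piKron (f : ι → Matrix m m R) : (piKron f).trace = ∏ t, (f t).trace := by
  simp only [Matrix.trace, Matrix.diag, piKron, Matrix.of_apply]
  exact (Fintype.prod_sum fun t x => f t x x).symm

end piKron

lemma sum_sum_prod_eq_pow {ι α β R : Type*} [Fintype ι] [DecidableEq ι] [Fintype α]
    [Fintype β] [CommSemiring R] (f : α → β → R) :
    ∑ a : ι → α, ∑ b : ι → β, ∏ t, f (a t) (b t) = (∑ x, ∑ y, f x y) ^ Fintype.card ι := by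
  rw [← Finset.card_univ, ← Finset.prod_const, Fintype.prod_sum]
  exact Finset.sum_congr rfl fun a _ => (Fintype.prod_sum fun t y => f (a t) y).symm

lemma pauliString_eq_piKron (n : ℕ) (a : Fin n → Fin 4) :
    pauliString n a = piKron fun t => pauli (a t) :=
  rfl

lemma pauli_mul_pauli_pow_four (α β : Fin 4) : (pauli α * pauli β) ^ 4 = 1 := by
  fin_cases α <;> fin_cases β <;>
    simp [pauli, pow_succ, Matrix.one_fin_two]

lemma pauli_mul_pauli_pow_mod_four (α β : Fin 4) (k : ℕ) :
    (pauli α * pauli β) ^ k = (pauli α * pauli β) ^ (k % 4) := by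
  conv_lhs => rw [← Nat.div_add_mod k 4, pow_add, pow_mul, pauli_mul_pauli_pow_four,
    one_pow, one_mul]

lemma sum_trace_pauli_mul_pauli_pow (k : ℕ) :
    ∑ α : Fin 4, ∑ β : Fin 4, ((pauli α * pauli β) ^ k).trace =
      if 4 ∣ k then 32 else 8 := by
  simp_rw [pauli_mul_pauli_pow_mod_four _ _ k, Nat.dvd_iff_mod_eq_zero]
  have hk : k % 4 < 4 := Nat.mod_lt k (by norm_num)
  interval_cases k % 4 <;>
    simp [Fin.sum_univ_four, pauli, pow_succ, Matrix.trace_fin_two, Matrix.one_fin_two] <;>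
    norm_num

theorem pauli_string_pair_trace_power_sum_general (n k : ℕ) :
    (4 ∣ k →
      (∑ a : Fin n → Fin 4, ∑ b : Fin n → Fin 4,
          Matrix.trace ((pauliString n a * pauliString n b) ^ k)) = ((2 : ℂ) ^ n) ^ 5) ∧
    (¬ (4 ∣ k) →
      (∑ a : Fin n → Fin 4, ∑ b : Fin n → Fin 4,
          Matrix.trace ((pauliString n a * pauliString n b) ^ k)) = ((2 : ℂ) ^ n) ^ 3) := by
  have hsum : ∑ a : Fin n → Fin 4, ∑ b : Fin n → Fin 4,
      ((pauliString n a * pauliString n b) ^ k).trace = (if 4 ∣ k then 32 else 8) ^ n := by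
    simp only [pauliString_eq_piKron, piKron_mul, piKron_pow, trace_piKron, Pi.mul_apply,
      Pi.pow_apply]
    rw [sum_sum_prod_eq_pow fun α β => ((pauli α * pauli β) ^ k).trace, Fintype.card_fin,
      sum_trace_pauli_mul_pauli_pow]
  refine ⟨fun hk => ?_, fun hk => ?_⟩
  · rw [hsum, if_pos hk, ← pow_mul, mul_comm, pow_mul]
    norm_num
  · rw [hsum, if_neg hk, ← pow_mul, mul_comm, pow_mul]
    norm_num

theorem pauli_string_pair_trace_power_sum (n k : ℕ) (hk : 1 ≤ k) :
    (4 ∣ k →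
      (∑ a : Fin n → Fin 4, ∑ b : Fin n → Fin 4,
          Matrix.trace ((pauliString n a * pauliString n b) ^ k)) = ((2 : ℂ) ^ n) ^ 5) ∧
    (¬ (4 ∣ k) →
      (∑ a : Fin n → Fin 4, ∑ b : Fin n → Fin 4,
          Matrix.trace ((pauliString n a * pauliString n b) ^ k)) = ((2 : ℂ) ^ n) ^ 3) :=
  pauli_string_pair_trace_power_sum_general n k
end

section
/- For n-qubit Pauli strings P₁, P₂, P₃ and d = 2^n, the sum over all triples of Tr[(P₁P₂P₃)^k] equals d²·5^n if k is odd, d^7 if k ≡ 0 (mod 4), and d^5 if k is even but not divisible by 4. Equivalently, the sum equals (50 + 30(-1)^k + 48cos(πk/2))^n. -/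
/-!
Pauli strings are Kronecker products of single-qubit Pauli matrices, so the trace of a power of a
product of three of them factorises over the qubits, and the sum over all triples is the `n`-th
power of its one-qubit value `S k = pauliTripleTraceSum k`. A product of three Pauli matrices is a
fourth root of unity times a Pauli matrix, hence its fourth power is `1`, `S k` depends only on
`k % 4`, and the Pauli multiplication table gives `S 0, S 1, S 2, S 3 = 128, 20, 32, 20`.
-/

open Matrix Complex

namespace Matrix

variable {ι l m p R : Type*} [Fintype ι] [CommSemiring R]

def piKronecker (M : ι → Matrix l m R) : Matrix (ι → l) (ι → m) R :=
  of fun i j => ∏ t, M t (i t) (j t)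

theorem piKronecker_mul [DecidableEq ι] [Fintype m] (M : ι → Matrix l m R)
    (N : ι → Matrix m p R) : piKronecker M * piKronecker N = piKronecker fun t => M t * N t := by
  ext i j
  simp only [piKronecker, mul_apply, of_apply, Fintype.prod_sum, ← Finset.prod_mul_distrib]

theorem piKronecker_one [DecidableEq m] : piKronecker (fun _ : ι => (1 : Matrix m m R)) = 1 := by
  ext i j
  by_cases h : i = j
  · subst h; simp [piKronecker]
  · obtain ⟨t, ht⟩ := Function.ne_iff.mp h
    rw [one_apply_ne h]
    exact Finset.prod_eq_zero (Finset.mem_univ t) (one_apply_ne ht)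

theorem piKronecker_pow [DecidableEq ι] [Fintype m] [DecidableEq m] (M : ι → Matrix m m R)
    (k : ℕ) : piKronecker M ^ k = piKronecker fun t => M t ^ k := by
  induction k with
  | zero => exact piKronecker_one.symm
  | succ k ih => simp only [pow_succ, ih, piKronecker_mul]

theorem trace_piKronecker [DecidableEq ι] [Fintype m] (M : ι → Matrix m m R) :
    trace (piKronecker M) = ∏ t, trace (M t) := by
  simp only [trace, diag, piKronecker, of_apply, Fintype.prod_sum]

end Matrix

theorem Fintype.prod_sum_sum_sum {ι α β γ R : Type*} [Fintype ι] [DecidableEq ι]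
    [Fintype α] [Fintype β] [Fintype γ] [CommSemiring R] (f : ι → α → β → γ → R) :
    ∏ t, ∑ x, ∑ y, ∑ z, f t x y z =
      ∑ a : ι → α, ∑ b : ι → β, ∑ c : ι → γ, ∏ t, f t (a t) (b t) (c t) := by
  simp only [Fintype.prod_sum]

def pauliMulIndex : Fin 4 → Fin 4 → Fin 4 :=
  ![![0, 1, 2, 3], ![1, 0, 3, 2], ![2, 3, 0, 1], ![3, 2, 1, 0]]

noncomputable def pauliMulPhase : Fin 4 → Fin 4 → ℂ :=
  ![![1, 1, 1, 1], ![1, 1, I, -I], ![1, -I, 1, I], ![1, I, -I, 1]]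

theorem pauli_mul (a b : Fin 4) :
    pauli a * pauli b = pauliMulPhase a b • pauli (pauliMulIndex a b) := by
  fin_cases a <;> fin_cases b <;> ext i j <;> fin_cases i <;> fin_cases j <;>
    simp [pauli, pauliMulPhase, pauliMulIndex, mul_apply, Fin.sum_univ_two, one_apply]

theorem pauli_mul_self (a : Fin 4) : pauli a * pauli a = 1 := by
  rw [pauli_mul]
  fin_cases a <;> simp [pauliMulPhase, pauliMulIndex, pauli]

theorem trace_pauli (a : Fin 4) : trace (pauli a) = if a = 0 then 2 else 0 := by
  fin_cases a <;> norm_num [pauli, trace, Fin.sum_univ_two]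

theorem pauliMulPhase_pow_four (a b : Fin 4) : pauliMulPhase a b ^ 4 = 1 := by
  fin_cases a <;> fin_cases b <;> norm_num [pauliMulPhase, neg_pow, I_pow_four]

theorem pauli_mul_mul (a b c : Fin 4) :
    pauli a * pauli b * pauli c =
      (pauliMulPhase a b * pauliMulPhase (pauliMulIndex a b) c) •
        pauli (pauliMulIndex (pauliMulIndex a b) c) := by
  rw [pauli_mul a b, smul_mul_assoc, pauli_mul, smul_smul]

theorem trace_pauli_pow (a : Fin 4) (k : ℕ) :
    trace (pauli a ^ k) = if Even k ∨ a = 0 then 2 else 0 := by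
  obtain ⟨m, rfl | rfl⟩ := Nat.even_or_odd' k
  · simp [pow_mul, sq, pauli_mul_self, trace_one]
  · simp [pow_succ, pow_mul, pauli_mul_self, trace_pauli]

theorem trace_pauli_mul_mul_pow (a b c : Fin 4) (k : ℕ) :
    trace ((pauli a * pauli b * pauli c) ^ k) =
      (pauliMulPhase a b * pauliMulPhase (pauliMulIndex a b) c) ^ k *
        if Even k ∨ pauliMulIndex (pauliMulIndex a b) c = 0 then 2 else 0 := by
  rw [pauli_mul_mul, smul_pow, trace_smul, trace_pauli_pow, smul_eq_mul]

theorem pauli_mul_mul_pow_four (a b c : Fin 4) : (pauli a * pauli b * pauli c) ^ 4 = 1 := by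
  rw [pauli_mul_mul, smul_pow, mul_pow, pauliMulPhase_pow_four, pauliMulPhase_pow_four, one_mul,
    one_smul, (by norm_num : 4 = 2 * 2), pow_mul, sq (pauli _), pauli_mul_self, one_pow]

noncomputable def pauliTripleTraceSum (k : ℕ) : ℂ :=
  ∑ a : Fin 4, ∑ b : Fin 4, ∑ c : Fin 4, trace ((pauli a * pauli b * pauli c) ^ k)

theorem pauliTripleTraceSum_mod_four (k : ℕ) :
    pauliTripleTraceSum k = pauliTripleTraceSum (k % 4) := by
  simp only [pauliTripleTraceSum, pow_eq_pow_mod k (pauli_mul_mul_pow_four _ _ _)]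

theorem pauliTripleTraceSum_zero : pauliTripleTraceSum 0 = 128 := by
  norm_num [pauliTripleTraceSum, trace_one]

theorem pauliTripleTraceSum_one : pauliTripleTraceSum 1 = 20 := by
  simp only [pauliTripleTraceSum, trace_pauli_mul_mul_pow, Fin.sum_univ_four, pauliMulPhase,
    pauliMulIndex, cons_val]
  norm_num [Fin.ext_iff, pow_succ]
  ring

theorem pauliTripleTraceSum_two : pauliTripleTraceSum 2 = 32 := by
  simp only [pauliTripleTraceSum, trace_pauli_mul_mul_pow, Fin.sum_univ_four, pauliMulPhase,
    pauliMulIndex, cons_val]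
  norm_num [Fin.ext_iff, pow_succ]

theorem pauliTripleTraceSum_three : pauliTripleTraceSum 3 = 20 := by
  simp only [pauliTripleTraceSum, trace_pauli_mul_mul_pow, Fin.sum_univ_four, pauliMulPhase,
    pauliMulIndex, cons_val]
  norm_num [Fin.ext_iff, pow_succ]
  ring

theorem pauliTripleTraceSum_of_odd {k : ℕ} (hk : Odd k) : pauliTripleTraceSum k = 20 := by
  rw [pauliTripleTraceSum_mod_four]
  have : k % 4 = 1 ∨ k % 4 = 3 := by have := Nat.odd_iff.mp hk; omega
  rcases this with h | h
  · rw [h, pauliTripleTraceSum_one]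
  · rw [h, pauliTripleTraceSum_three]

theorem pauliTripleTraceSum_of_four_dvd {k : ℕ} (hk : 4 ∣ k) : pauliTripleTraceSum k = 128 := by
  rw [pauliTripleTraceSum_mod_four, Nat.mod_eq_zero_of_dvd hk, pauliTripleTraceSum_zero]

theorem pauliTripleTraceSum_of_even_of_not_four_dvd {k : ℕ} (hk : Even k) (hk4 : ¬4 ∣ k) :
    pauliTripleTraceSum k = 32 := by
  have : k % 4 = 2 := by have := Nat.even_iff.mp hk; omega
  rw [pauliTripleTraceSum_mod_four, this, pauliTripleTraceSum_two]

theorem pauliTripleTraceSum_eq_cos (k : ℕ) :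
    pauliTripleTraceSum k =
      ((50 + 30 * (-1 : ℝ) ^ k + 48 * Real.cos (Real.pi * k / 2) : ℝ) : ℂ) := by
  obtain ⟨m, rfl | rfl⟩ := Nat.even_or_odd' k
  · obtain ⟨q, rfl | rfl⟩ := Nat.even_or_odd' m
    · have hcos : Real.cos (Real.pi * ↑(2 * (2 * q)) / 2) = 1 := by
        rw [← Real.cos_nat_mul_two_pi q]; push_cast; ring_nf
      rw [pauliTripleTraceSum_of_four_dvd ⟨q, by ring⟩, hcos, (even_two_mul _).neg_one_pow]
      norm_num
    · have hcos : Real.cos (Real.pi * ↑(2 * (2 * q + 1)) / 2) = -1 := by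
        rw [← Real.cos_nat_mul_two_pi_add_pi q]; push_cast; ring_nf
      rw [pauliTripleTraceSum_of_even_of_not_four_dvd (even_two_mul _) (by omega), hcos,
        (even_two_mul _).neg_one_pow]
      norm_num
  · have hcos : Real.cos (Real.pi * ↑(2 * m + 1) / 2) = 0 :=
      Real.cos_eq_zero_iff.mpr ⟨m, by push_cast; ring⟩
    rw [pauliTripleTraceSum_of_odd (odd_two_mul_add_one m), hcos,
      (odd_two_mul_add_one m).neg_one_pow]
    norm_num

theorem pauliString_eq_piKronecker (n : ℕ) (a : Fin n → Fin 4) :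
    pauliString n a = piKronecker fun t => pauli (a t) := rfl

theorem sum_trace_pauliString_mul_mul_pow (n k : ℕ) :
    ∑ a : Fin n → Fin 4, ∑ b : Fin n → Fin 4, ∑ c : Fin n → Fin 4,
        trace ((pauliString n a * pauliString n b * pauliString n c) ^ k) =
      pauliTripleTraceSum k ^ n := by
  simp only [pauliString_eq_piKronecker, piKronecker_mul, piKronecker_pow, trace_piKronecker,
    ← Fintype.prod_sum_sum_sum fun _ x y z => trace ((pauli x * pauli y * pauli z) ^ k)]
  exact Fin.prod_const n _

theorem pauli_string_triple_trace_power_sum_general (n k : ℕ) :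
    (Odd k →
      (∑ a : Fin n → Fin 4, ∑ b : Fin n → Fin 4, ∑ c : Fin n → Fin 4,
          Matrix.trace ((pauliString n a * pauliString n b * pauliString n c) ^ k)) =
        ((2 : ℂ) ^ n) ^ 2 * (5 : ℂ) ^ n) ∧
    (4 ∣ k →
      (∑ a : Fin n → Fin 4, ∑ b : Fin n → Fin 4, ∑ c : Fin n → Fin 4,
          Matrix.trace ((pauliString n a * pauliString n b * pauliString n c) ^ k)) =
        ((2 : ℂ) ^ n) ^ 7) ∧
    (Even k → ¬ (4 ∣ k) →
      (∑ a : Fin n → Fin 4, ∑ b : Fin n → Fin 4, ∑ c : Fin n → Fin 4,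
          Matrix.trace ((pauliString n a * pauliString n b * pauliString n c) ^ k)) =
        ((2 : ℂ) ^ n) ^ 5) ∧
    (∑ a : Fin n → Fin 4, ∑ b : Fin n → Fin 4, ∑ c : Fin n → Fin 4,
        Matrix.trace ((pauliString n a * pauliString n b * pauliString n c) ^ k)) =
      (((50 + 30 * (-1 : ℝ) ^ k + 48 * Real.cos (Real.pi * k / 2)) ^ n : ℝ) : ℂ) := by
  simp only [sum_trace_pauliString_mul_mul_pow]
  have two_pow_pow_comm (m : ℕ) : ((2 : ℂ) ^ n) ^ m = ((2 : ℂ) ^ m) ^ n := by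
    rw [← pow_mul, ← pow_mul, mul_comm]
  refine ⟨fun hk => ?_, fun hk => ?_, fun hk hk4 => ?_, ?_⟩
  · rw [pauliTripleTraceSum_of_odd hk, two_pow_pow_comm, ← mul_pow]
    norm_num
  · rw [pauliTripleTraceSum_of_four_dvd hk, two_pow_pow_comm]
    norm_num
  · rw [pauliTripleTraceSum_of_even_of_not_four_dvd hk hk4, two_pow_pow_comm]
    norm_num
  · rw [pauliTripleTraceSum_eq_cos, Complex.ofReal_pow]

theorem pauli_string_triple_trace_power_sum (n k : ℕ) (hk : 1 ≤ k) :
    (Odd k →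
      (∑ a : Fin n → Fin 4, ∑ b : Fin n → Fin 4, ∑ c : Fin n → Fin 4,
          Matrix.trace ((pauliString n a * pauliString n b * pauliString n c) ^ k)) =
        ((2 : ℂ) ^ n) ^ 2 * (5 : ℂ) ^ n) ∧
    (4 ∣ k →
      (∑ a : Fin n → Fin 4, ∑ b : Fin n → Fin 4, ∑ c : Fin n → Fin 4,
          Matrix.trace ((pauliString n a * pauliString n b * pauliString n c) ^ k)) =
        ((2 : ℂ) ^ n) ^ 7) ∧
    (Even k → ¬ (4 ∣ k) →
      (∑ a : Fin n → Fin 4, ∑ b : Fin n → Fin 4, ∑ c : Fin n → Fin 4,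
          Matrix.trace ((pauliString n a * pauliString n b * pauliString n c) ^ k)) =
        ((2 : ℂ) ^ n) ^ 5) ∧
    (∑ a : Fin n → Fin 4, ∑ b : Fin n → Fin 4, ∑ c : Fin n → Fin 4,
        Matrix.trace ((pauliString n a * pauliString n b * pauliString n c) ^ k)) =
      (((50 + 30 * (-1 : ℝ) ^ k + 48 * Real.cos (Real.pi * k / 2)) ^ n : ℝ) : ℂ) :=
  pauli_string_triple_trace_power_sum_general n k
end

section
/- (Bhatia–Davis inequality) Let X be a real random variable with m ≤ X ≤ M almost surely and mean μ = E[X]. Then Var(X) ≤ (M − μ)(μ − m). -/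
open MeasureTheory ProbabilityTheory

/-- Bhatia–Davis inequality: if `m ≤ X ≤ M` almost surely, then
`Var(X) ≤ (M − E[X])(E[X] − m)`. -/
theorem bhatia_davis {Ω : Type*} [MeasurableSpace Ω] (μ : Measure Ω)
    [IsProbabilityMeasure μ] (X : Ω → ℝ) (hX : Measurable X) (m M : ℝ)
    (hbound : ∀ᵐ ω ∂μ, X ω ∈ Set.Icc m M) :
    variance X μ ≤ (M - ∫ ω, X ω ∂μ) * ((∫ ω, X ω ∂μ) - m) :=
  variance_le_sub_mul_sub hbound hX.aemeasurable
end
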